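/- Assume nκ ∉ ℤ. Then for every k ∈ {1,…,n}, (1/n)·Σ_{j=1}^n w_{kj}^n · sin(2πq(j−k)/n + σ) = (1/n)·Σ_{j∈ℤ, |j|≤nκ} sin(2πqj/n + σ). Consequently, for any b₁, b₃ ∈ ℝ, the functions û_k^n(t) = 2πqk/n + Ω_D^n·t, k = 1,…,n, form a solution of the controlled KM whose target orbit is (û_k^n) itself (the feedback terms vanish identically along it). -/
import Mathlib


open MeasureTheory Real Set Filter
open scoped ENNReal

noncomputable section

/-- The weights `w_{kj}^n` of the `⌊nκ⌋`-nearest neighbor graph. -/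
def wKM (κ : ℝ) (n k j : ℕ) : ℝ :=
  if |(k:ℝ) - (j:ℝ)| ≤ n * κ ∨ |(k:ℝ) - (j:ℝ)| ≥ n * (1 - κ) then 1 else 0

/-- `Ω_D^n = ω + (1/n) Σ_{j ∈ ℤ, |j| ≤ nκ} sin(2πqj/n + σ)` (since `κ ≤ 1/2`,
only `|j| ≤ n` can contribute). -/
def OmD (κ : ℝ) (q : ℕ) (σ ω : ℝ) (n : ℕ) : ℝ :=
  ω + (1 / (n:ℝ)) * ∑ j ∈ Finset.Icc (-(n:ℤ)) (n:ℤ),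
    (if |(j:ℝ)| ≤ n * κ then Real.sin (2 * π * q * j / n + σ) else 0)

/-- The discrete target orbit `û_k^n(t) = 2πqk/n + Ω_D^n t`. -/
def uhatKM (κ : ℝ) (q : ℕ) (σ ω : ℝ) (n k : ℕ) (t : ℝ) : ℝ :=
  2 * π * q * k / n + OmD κ q σ ω n * t

/-- The right-hand side of the controlled Kuramoto model for oscillator `k`
(nodes are numbered `1,…,n`, i.e. node `k.1 + 1` for `k : Fin n`). -/
def KMrhs (κ : ℝ) (q : ℕ) (σ ω b₁ b₃ : ℝ) (n : ℕ) (v : Fin n → ℝ) (t : ℝ) (k : Fin n) : ℝ :=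
  ω + (1 / (n:ℝ)) * ∑ j : Fin n, wKM κ n (k.1 + 1) (j.1 + 1) * Real.sin (v j - v k + σ)
    + b₁ * (uhatKM κ q σ ω n (k.1 + 1) t - v k)
    + b₃ * (uhatKM κ q σ ω n (k.1 + 1) t - v k) ^ 3

/-- A solution of the `n`-oscillator controlled Kuramoto model on a time interval `J`. -/
def IsKMSolution (κ : ℝ) (q : ℕ) (σ ω b₁ b₃ : ℝ) (n : ℕ) (J : Set ℝ) (u : ℝ → Fin n → ℝ) : Prop :=
  ∀ t ∈ J, ∀ k : Fin n, HasDerivAt (fun s => u s k) (KMrhs κ q σ ω b₁ b₃ n (u t) t k) t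

/-- The interval `I_k^n`: `[(k-1)/n, k/n)` for `k < n` and `[(n-1)/n, 1]` for `k = n`. -/
def Ikn (n k : ℕ) : Set ℝ :=
  if k = n then Set.Icc (((n:ℝ) - 1) / n) 1 else Set.Ico (((k:ℝ) - 1) / n) ((k:ℝ) / n)

/-- The step function `Σ_{k=1}^n v_k · 1_{I_k^n}` associated with `(v_1,…,v_n)`. -/
def stepFun (n : ℕ) (v : Fin n → ℝ) : ℝ → ℝ :=
  fun x => ∑ k : Fin n, Set.indicator (Ikn n (k.1 + 1)) (fun _ => v k) x

/-- Auxiliary reindexing lemma over `ℤ`: for an `n`-periodic function `F` and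
`0 ≤ A`, `2A+1 ≤ n`, `1 ≤ k ≤ n`, the sum over `j ∈ [1,n]` with
`|k-j| ≤ A ∨ n-A ≤ |k-j|` of `F (j-k)` equals the sum of `F` over `[-A,A]`. -/
lemma KM_aux_sum (n k A : ℤ) (hk1 : 1 ≤ k) (hkn : k ≤ n) (hA0 : 0 ≤ A) (h2A : 2*A + 1 ≤ n)
    (F : ℤ → ℝ) (hF : ∀ m, F (m + n) = F m) :
    ∑ j ∈ Finset.Icc (1:ℤ) n, (if |k - j| ≤ A ∨ n - A ≤ |k - j| then F (j - k) else 0)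
      = ∑ m ∈ Finset.Icc (-A) A, F m := by
  have habs : ∀ z : ℤ, (|z| ≤ A ∨ n - A ≤ |z|) ↔ ((-A ≤ z ∧ z ≤ A) ∨ (n - A ≤ z ∨ z ≤ A - n)) := by
    intro z
    rcases abs_cases z with ⟨h, h'⟩ | ⟨h, h'⟩ <;> rw [h] <;> omega
  rw [← Finset.sum_filter]
  refine Finset.sum_nbij'
    (fun j => if j - k < -A then j - k + n else if A < j - k then j - k - n else j - k)
    (fun m => if m + k < 1 then m + k + n else if n < m + k then m + k - n else m + k)
    ?_ ?_ ?_ ?_ ?_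
  · intro a ha
    simp only [Finset.mem_filter, Finset.mem_Icc, habs] at ha
    simp only [Finset.mem_Icc]
    split_ifs <;> omega
  · intro a ha
    simp only [Finset.mem_Icc] at ha
    simp only [Finset.mem_filter, Finset.mem_Icc, habs]
    split_ifs <;> omega
  · intro a ha
    simp only [Finset.mem_filter, Finset.mem_Icc, habs] at ha
    split_ifs <;> omega
  · intro a ha
    simp only [Finset.mem_Icc] at ha
    split_ifs <;> omega
  · intro a ha
    simp only [Finset.mem_filter, Finset.mem_Icc, habs] at ha
    split_ifs with h1 h2
    · exact (hF (a - k)).symm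
    · have h := hF (a - k - n)
      rw [show a - k - n + n = a - k by ring] at h
      exact h
    · rfl

/-- If `nκ ∉ ℤ`, the coupling sum along the twisted state is the same
at every node, and consequently the discrete twisted state `û_k^n` is a solution of
the controlled KM whose target orbit is itself, for any feedback gains. -/
theorem stmt6 (κ : ℝ) (q : ℕ) (σ ω : ℝ) (n : ℕ)
    (hκ : κ ∈ Set.Ioc (0:ℝ) (1/2)) (hq : 0 < q)
    (hσ : σ ∈ Set.Ioo (-(π/2)) (π/2))
    (hn : ∀ m : ℤ, (n:ℝ) * κ ≠ (m:ℝ)) :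
    (∀ k : ℕ, 1 ≤ k → k ≤ n →
      (1 / (n:ℝ)) * ∑ j ∈ Finset.Icc 1 n,
          wKM κ n k j * Real.sin (2 * π * q * ((j:ℝ) - (k:ℝ)) / n + σ)
        = (1 / (n:ℝ)) * ∑ j ∈ Finset.Icc (-(n:ℤ)) (n:ℤ),
            (if |(j:ℝ)| ≤ n * κ then Real.sin (2 * π * q * j / n + σ) else 0)) ∧
    (∀ b₁ b₃ : ℝ, IsKMSolution κ q σ ω b₁ b₃ n Set.univ
      (fun t k => uhatKM κ q σ ω n (k.1 + 1) t)) := by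
  obtain ⟨hκ0, hκ2⟩ := hκ
  have hn1 : 1 ≤ n := by
    rcases Nat.eq_zero_or_pos n with h | h
    · exact absurd (by simp [h] : (n:ℝ) * κ = ((0:ℤ):ℝ)) (hn 0)
    · exact h
  have hnR : (0:ℝ) < n := by exact_mod_cast hn1
  set A : ℤ := ⌊(n:ℝ) * κ⌋ with hAdef
  have hAle : (A:ℝ) ≤ n * κ := Int.floor_le _
  have hAlt : (A:ℝ) < n * κ := lt_of_le_of_ne hAle (fun h => hn A h.symm)
  have hA1 : (n:ℝ) * κ < A + 1 := Int.lt_floor_add_one _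
  have hA0 : 0 ≤ A := Int.floor_nonneg.2 (by positivity)
  have h2A : 2 * A + 1 ≤ (n:ℤ) := by
    have h1 : ((2*A : ℤ) : ℝ) < (n:ℝ) := by push_cast; nlinarith
    have h2 : (2*A : ℤ) < (n:ℤ) := by exact_mod_cast h1
    omega
  have hcond : ∀ z : ℤ,
      ((|(z:ℝ)| ≤ (n:ℝ) * κ ∨ |(z:ℝ)| ≥ (n:ℝ) * (1 - κ)) ↔ (|z| ≤ A ∨ (n:ℤ) - A ≤ |z|)) := by
    intro z
    have hc : |((z:ℤ):ℝ)| = ((|z| : ℤ) : ℝ) := by push_cast; ring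
    constructor
    · rintro (h | h)
      · left
        exact Int.le_floor.2 (by rw [← hc]; exact h)
      · right
        have h3 : (((n:ℤ) - A - 1 : ℤ) : ℝ) < ((|z| : ℤ) : ℝ) := by
          rw [← hc]; push_cast; nlinarith
        have h4 : (n:ℤ) - A - 1 < |z| := by exact_mod_cast h3
        omega
    · rintro (h | h)
      · left
        have h3 : ((|z| : ℤ) : ℝ) ≤ (A:ℝ) := by exact_mod_cast h
        rw [hc]; linarith
      · right
        have h3 : (((n:ℤ) - A : ℤ) : ℝ) ≤ ((|z| : ℤ) : ℝ) := by exact_mod_cast h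
        rw [hc]
        have h4 : (n:ℝ) * (1 - κ) < (((n:ℤ) - A : ℤ) : ℝ) := by push_cast; nlinarith
        linarith
  set F : ℤ → ℝ := fun m => Real.sin (2 * π * q * m / n + σ) with hFdef
  have hF : ∀ m : ℤ, F (m + (n:ℤ)) = F m := by
    intro m
    simp only [hFdef]
    have h1 : 2 * π * (q:ℝ) * (((m + (n:ℤ) : ℤ)) : ℝ) / n + σ
        = (2 * π * q * (m:ℝ) / n + σ) + (q:ℝ) * (2 * π) := by
      push_cast
      field_simp
      ring
    rw [h1, Real.sin_add_nat_mul_two_pi]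
  have key : ∀ k : ℕ, 1 ≤ k → k ≤ n →
      (∑ j ∈ Finset.Icc 1 n, wKM κ n k j * Real.sin (2 * π * q * ((j:ℝ) - (k:ℝ)) / n + σ))
        = ∑ j ∈ Finset.Icc (-(n:ℤ)) (n:ℤ),
            (if |(j:ℝ)| ≤ n * κ then Real.sin (2 * π * q * j / n + σ) else 0) := by
    intro k hk1 hkn
    have hL : (∑ j ∈ Finset.Icc 1 n, wKM κ n k j * Real.sin (2 * π * q * ((j:ℝ) - (k:ℝ)) / n + σ))
        = ∑ j ∈ Finset.Icc (1:ℤ) (n:ℤ),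
            (if |(k:ℤ) - j| ≤ A ∨ (n:ℤ) - A ≤ |(k:ℤ) - j| then F (j - (k:ℤ)) else 0) := by
      refine Finset.sum_nbij' (fun j => (j:ℤ)) (fun j => j.toNat) ?_ ?_ ?_ ?_ ?_
      · intro a ha
        simp only [Finset.mem_Icc] at *
        omega
      · intro a ha
        simp only [Finset.mem_Icc] at *
        omega
      · intro a _
        simp
      · intro a ha
        simp only [Finset.mem_Icc] at ha
        omega
      · intro a ha
        simp only [Finset.mem_Icc] at ha
        unfold wKM
        rw [ite_mul, one_mul, zero_mul]
        refine if_congr ?_ ?_ rfl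
        · have hz : |(k:ℝ) - (a:ℝ)| = |((((k:ℤ) - (a:ℤ)) : ℤ) : ℝ)| := by
            norm_cast
          rw [hz]
          exact hcond ((k:ℤ) - (a:ℤ))
        · simp only [hFdef]
          push_cast
          ring_nf
    have hR : (∑ j ∈ Finset.Icc (-(n:ℤ)) (n:ℤ),
          (if |(j:ℝ)| ≤ n * κ then Real.sin (2 * π * q * j / n + σ) else 0))
        = ∑ m ∈ Finset.Icc (-A) A, F m := by
      rw [← Finset.sum_filter]
      have hset : (Finset.Icc (-(n:ℤ)) (n:ℤ)).filter (fun j : ℤ => |(j:ℝ)| ≤ (n:ℝ) * κ)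
          = Finset.Icc (-A) A := by
        ext z
        simp only [Finset.mem_filter, Finset.mem_Icc]
        constructor
        · rintro ⟨_, h⟩
          have h1 : |z| ≤ A := by
            refine Int.le_floor.2 ?_
            rw [show ((|z| : ℤ) : ℝ) = |(z:ℝ)| by push_cast; ring]
            exact h
          exact abs_le.1 h1
        · rintro ⟨h1, h2⟩
          refine ⟨⟨by omega, by omega⟩, ?_⟩
          have h3 : |z| ≤ A := abs_le.2 ⟨h1, h2⟩
          have h4 : ((|z| : ℤ) : ℝ) ≤ (A:ℝ) := by exact_mod_cast h3
          have h5 : |((z:ℤ):ℝ)| = ((|z| : ℤ) : ℝ) := by push_cast; ring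
          rw [h5]; linarith
      rw [hset]
    rw [hL, KM_aux_sum (n:ℤ) (k:ℤ) A (by exact_mod_cast hk1) (by exact_mod_cast hkn) hA0 h2A F hF]
    exact hR.symm
  constructor
  · intro k hk1 hkn
    rw [key k hk1 hkn]
  · intro b₁ b₃ t _ k
    have hderiv : HasDerivAt (fun s => uhatKM κ q σ ω n (k.1 + 1) s) (OmD κ q σ ω n) t := by
      unfold uhatKM
      simpa using ((hasDerivAt_id t).const_mul (OmD κ q σ ω n)).const_add
        (2 * π * (q:ℝ) * ((k.1 + 1 : ℕ) : ℝ) / n)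
    have hrhs : KMrhs κ q σ ω b₁ b₃ n (fun j => uhatKM κ q σ ω n (j.1 + 1) t) t k
        = OmD κ q σ ω n := by
      unfold KMrhs
      simp only [sub_self, mul_zero, zero_pow, add_zero, OfNat.ofNat_ne_zero, ne_eq,
        not_false_eq_true]
      have harg : ∀ j : Fin n,
          uhatKM κ q σ ω n (j.1 + 1) t - uhatKM κ q σ ω n (k.1 + 1) t + σ
            = 2 * π * q * (((j.1 + 1 : ℕ) : ℝ) - ((k.1 + 1 : ℕ) : ℝ)) / n + σ := by
        intro j
        unfold uhatKM
        push_cast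
        field_simp
        ring
      have hsum : ∑ j : Fin n, wKM κ n (k.1 + 1) (j.1 + 1)
            * Real.sin (uhatKM κ q σ ω n (j.1 + 1) t - uhatKM κ q σ ω n (k.1 + 1) t + σ)
          = ∑ j ∈ Finset.Icc 1 n, wKM κ n (k.1 + 1) j
            * Real.sin (2 * π * q * ((j:ℝ) - ((k.1 + 1 : ℕ) : ℝ)) / n + σ) := by
        refine Finset.sum_nbij' (fun j : Fin n => j.1 + 1)
          (fun j => ⟨(j - 1) % n, Nat.mod_lt _ (by omega)⟩) ?_ ?_ ?_ ?_ ?_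
        · intro a _
          simp only [Finset.mem_Icc]
          omega
        · intro a _
          exact Finset.mem_univ _
        · intro a _
          ext
          simp only
          exact Nat.mod_eq_of_lt (by omega)
        · intro a ha
          simp only [Finset.mem_Icc] at ha
          dsimp only
          rw [Nat.mod_eq_of_lt (by omega)]
          omega
        · intro a _
          rw [harg a]
      rw [hsum, key (k.1 + 1) (by omega) (by omega)]
      rfl
    show HasDerivAt (fun s => uhatKM κ q σ ω n (k.1 + 1) s)
      (KMrhs κ q σ ω b₁ b₃ n (fun j => uhatKM κ q σ ω n (j.1 + 1) t) t k) t
    rw [hrhs]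
    exact hderiv
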